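/- arXiv:2501.05148 — 7 statements merged into one kernel-verified Lean document; each statement's English description precedes it below -/
import Mathlib

section
/- An oriented star K⃗_{1,n} (n ≥ 1) is {1}-antimagic if and only if either n = 1, or n = 2 and exactly one of the two leaves is a source (t = 1). -/
/-- `relPow A k u v` : there is a directed walk of length `k` from `u` to `v`
along the arc relation `A`. -/
def relPow {V : Type*} (A : V → V → Prop) : ℕ → V → V → Prop
  | 0 => fun u v => u = v
  | k + 1 => fun u v => ∃ w, A u w ∧ relPow A k w v

/-- `distEq A u v k` : the directed distance from `u` to `v` is exactly `k`,
i.e. `k` is the length of a shortest directed path from `u` to `v`. -/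
def distEq {V : Type*} (A : V → V → Prop) (u v : V) (k : ℕ) : Prop :=
  relPow A k u v ∧ ∀ j < k, ¬ relPow A j u v

open Classical in
/-- The `D`-weight of vertex `u` under labeling `g`: the sum of the labels of all
vertices whose directed distance from `u` lies in `D`. -/
noncomputable def weightD {V : Type*} [Fintype V] (A : V → V → Prop) (D : Set ℕ)
    (g : V → ℕ) (u : V) : ℕ :=
  ∑ v : V, if ∃ k ∈ D, distEq A u v k then g v else 0

/-- A directed graph (given by its arc relation `A`) is `D`-antimagic if there is a
bijective labeling of the vertices with `{1, …, |V|}` whose `D`-weights are pairwise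
distinct. -/
def IsDAntimagic {V : Type*} [Fintype V] (A : V → V → Prop) (D : Set ℕ) : Prop :=
  ∃ g : V → ℕ, Set.BijOn g Set.univ (Set.Icc 1 (Fintype.card V)) ∧
    Function.Injective (weightD A D g)

/-- A vertex is a source if all its incident arcs are outgoing (no incoming arcs). -/
def IsSource {V : Type*} (A : V → V → Prop) (u : V) : Prop := ∀ v, ¬ A v u

/-- A vertex is a sink if all its incident arcs are incoming (no outgoing arcs). -/
def IsSink {V : Type*} (A : V → V → Prop) (u : V) : Prop := ∀ v, ¬ A u v

/-- The oriented star `K⃗_{1,n}`: vertices are `Option (Fin n)`, with `none` the center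
and `some i` the leaves; `σ i = true` iff leaf `i` is a source (its arc points to the
center), and `σ i = false` iff leaf `i` is a sink. -/
def starArc (n : ℕ) (σ : Fin n → Bool) :
    Option (Fin n) → Option (Fin n) → Prop :=
  fun u w => ∃ i : Fin n,
    (u = some i ∧ w = none ∧ σ i = true) ∨
    (u = none ∧ w = some i ∧ σ i = false)

lemma starArc_ne {n : ℕ} {σ : Fin n → Bool} {u v : Option (Fin n)}
    (h : starArc n σ u v) : u ≠ v := by
  rcases h with ⟨i, ⟨hu, hv, _⟩ | ⟨hu, hv, _⟩⟩ <;> simp [hu, hv]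

lemma distEq_one_iff {n : ℕ} {σ : Fin n → Bool} (u v : Option (Fin n)) :
    (∃ k ∈ ({1} : Set ℕ), distEq (starArc n σ) u v k) ↔ starArc n σ u v := by
  constructor
  · rintro ⟨k, hk, h⟩
    simp only [Set.mem_singleton_iff] at hk; subst hk
    obtain ⟨⟨w, hw, hwv⟩, -⟩ := h
    have : w = v := hwv
    subst this; exact hw
  · intro h
    refine ⟨1, rfl, ⟨⟨v, h, rfl⟩, ?_⟩⟩
    intro j hj
    interval_cases j
    exact fun e => starArc_ne h e

open Classical in
lemma weight_eq {n : ℕ} (σ : Fin n → Bool) (g : Option (Fin n) → ℕ)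
    (u : Option (Fin n)) :
    weightD (starArc n σ) {1} g u
      = ∑ v : Option (Fin n), if starArc n σ u v then g v else 0 := by
  classical
  unfold weightD
  apply Finset.sum_congr rfl
  intro v _
  exact if_congr (distEq_one_iff u v) rfl rfl

open Classical in
lemma weight_some {n : ℕ} (σ : Fin n → Bool) (g : Option (Fin n) → ℕ) (i : Fin n) :
    weightD (starArc n σ) {1} g (some i) = if σ i = true then g none else 0 := by
  classical
  rw [weight_eq, Fintype.sum_option]
  have h1 : (if starArc n σ (some i) none then g none else 0)
      = if σ i = true then g none else 0 := by
    refine if_congr ?_ rfl rfl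
    constructor
    · rintro ⟨j, ⟨hu, -, hσ⟩ | ⟨hu, -⟩⟩
      · cases hu; exact hσ
      · cases hu
    · intro h; exact ⟨i, Or.inl ⟨rfl, rfl, h⟩⟩
  have h2 : ∀ j : Fin n, (if starArc n σ (some i) (some j) then g (some j) else 0) = 0 := by
    intro j
    rw [if_neg]
    rintro ⟨k, ⟨-, hv, -⟩ | ⟨hu, -⟩⟩
    · cases hv
    · cases hu
  simp [h1, h2]

open Classical in
lemma weight_none {n : ℕ} (σ : Fin n → Bool) (g : Option (Fin n) → ℕ) :
    weightD (starArc n σ) {1} g none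
      = ∑ j : Fin n, if σ j = false then g (some j) else 0 := by
  classical
  rw [weight_eq, Fintype.sum_option]
  have h1 : (if starArc n σ none none then g none else 0) = 0 := by
    rw [if_neg]; exact fun h => starArc_ne h rfl
  have h2 : ∀ j : Fin n, (if starArc n σ none (some j) then g (some j) else 0)
      = if σ j = false then g (some j) else 0 := by
    intro j
    refine if_congr ?_ rfl rfl
    constructor
    · rintro ⟨k, ⟨hu, -⟩ | ⟨-, hv, hσ⟩⟩
      · cases hu
      · cases hv; exact hσ
    · intro h; exact ⟨j, Or.inr ⟨rfl, rfl, h⟩⟩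
  simp only [h1, h2, zero_add]


/-- An oriented star `K⃗_{1,n}` (`n ≥ 1`) is `{1}`-antimagic iff
`n = 1`, or `n = 2` and exactly one of the two leaves is a source (`t = 1`). -/
theorem orientedStar_one_antimagic_iff (n : ℕ) (hn : 1 ≤ n) (σ : Fin n → Bool) :
    IsDAntimagic (starArc n σ) {1} ↔
      n = 1 ∨ (n = 2 ∧ (Finset.univ.filter (fun i => σ i = true)).card = 1) := by
  constructor
  · rintro ⟨g, hbij, hinj⟩
    have hσinj : Function.Injective σ := by
      intro i j hij
      have heq : weightD (starArc n σ) {1} g (some i)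
          = weightD (starArc n σ) {1} g (some j) := by
        rw [weight_some, weight_some, hij]
      have := hinj heq
      exact Option.some_injective _ this
    have hle : n ≤ 2 := by
      have := Fintype.card_le_of_injective σ hσinj
      simpa using this
    interval_cases n
    · exact Or.inl rfl
    · refine Or.inr ⟨rfl, ?_⟩
      have h01 : σ 0 ≠ σ 1 := fun h => absurd (hσinj h) (by decide)
      rw [Finset.card_filter, Fin.sum_univ_two]
      rcases Bool.eq_false_or_eq_true (σ 0) with h0 | h0 <;>
        rcases Bool.eq_false_or_eq_true (σ 1) with h1 | h1 <;>
        simp_all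
  · rintro (rfl | ⟨rfl, ht⟩)
    · -- n = 1
      refine ⟨fun u => u.elim 1 (fun _ => 2), ?_, ?_⟩
      · have hc : Fintype.card (Option (Fin 1)) = 2 := by simp
        rw [hc]
        refine ⟨?_, ?_, ?_⟩
        · rintro (_ | i) - <;> simp
        · exact Function.Injective.injOn (by decide)
        · intro x hx
          simp only [Set.mem_Icc] at hx
          obtain ⟨hx1, hx2⟩ := hx
          interval_cases x
          · exact ⟨none, trivial, rfl⟩
          · exact ⟨some 0, trivial, rfl⟩
      · have w0 : weightD (starArc 1 σ) {1} (fun u => u.elim 1 (fun _ => 2)) (some 0)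
            = if σ 0 = true then 1 else 0 := by
          rw [weight_some]; rfl
        have wn : weightD (starArc 1 σ) {1} (fun u => u.elim 1 (fun _ => 2)) none
            = if σ 0 = false then 2 else 0 := by
          rw [weight_none, Fin.sum_univ_one]; rfl
        intro u v h
        rcases u with _ | i <;> rcases v with _ | j
        · rfl
        · have : j = 0 := Subsingleton.elim _ _
          subst this
          rw [wn, w0] at h
          rcases Bool.eq_false_or_eq_true (σ 0) with h0 | h0 <;> simp [h0] at h
        · have : i = 0 := Subsingleton.elim _ _
          subst this
          rw [wn, w0] at h
          rcases Bool.eq_false_or_eq_true (σ 0) with h0 | h0 <;> simp [h0] at h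
        · have hi : i = 0 := Subsingleton.elim _ _
          have hj : j = 0 := Subsingleton.elim _ _
          rw [hi, hj]
    · -- n = 2, exactly one source
      rw [Finset.card_filter, Fin.sum_univ_two] at ht
      rcases Bool.eq_false_or_eq_true (σ 0) with h0 | h0 <;>
        rcases Bool.eq_false_or_eq_true (σ 1) with h1 | h1
      · simp [h0, h1] at ht
      · -- σ 0 = true, σ 1 = false
        refine ⟨fun u => u.elim 1 (fun i => if i = 0 then 2 else 3), ?_, ?_⟩
        · have hc : Fintype.card (Option (Fin 2)) = 3 := by simp
          rw [hc]
          refine ⟨?_, ?_, ?_⟩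
          · rintro (_ | i) -
            · simp
            · fin_cases i <;> simp
          · exact Function.Injective.injOn (by decide)
          · intro x hx
            simp only [Set.mem_Icc] at hx
            obtain ⟨hx1, hx2⟩ := hx
            interval_cases x
            · exact ⟨none, trivial, rfl⟩
            · exact ⟨some 0, trivial, rfl⟩
            · exact ⟨some 1, trivial, rfl⟩
        · set g : Option (Fin 2) → ℕ := fun u => u.elim 1 (fun i => if i = 0 then 2 else 3)
            with hg
          have w0 : weightD (starArc 2 σ) {1} g (some 0) = 1 := by
            rw [weight_some, h0]; simp [hg]
          have w1 : weightD (starArc 2 σ) {1} g (some 1) = 0 := by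
            rw [weight_some, h1]; simp
          have wn : weightD (starArc 2 σ) {1} g none = 3 := by
            rw [weight_none, Fin.sum_univ_two, h0, h1]; simp [hg]
          intro u v h
          rcases u with _ | i <;> rcases v with _ | j
          · rfl
          · fin_cases j <;> simp_all
          · fin_cases i <;> simp_all
          · fin_cases i <;> fin_cases j <;> simp_all
      · -- σ 0 = false, σ 1 = true
        refine ⟨fun u => u.elim 1 (fun i => if i = 0 then 3 else 2), ?_, ?_⟩
        · have hc : Fintype.card (Option (Fin 2)) = 3 := by simp
          rw [hc]
          refine ⟨?_, ?_, ?_⟩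
          · rintro (_ | i) -
            · simp
            · fin_cases i <;> simp
          · exact Function.Injective.injOn (by decide)
          · intro x hx
            simp only [Set.mem_Icc] at hx
            obtain ⟨hx1, hx2⟩ := hx
            interval_cases x
            · exact ⟨none, trivial, rfl⟩
            · exact ⟨some 1, trivial, rfl⟩
            · exact ⟨some 0, trivial, rfl⟩
        · set g : Option (Fin 2) → ℕ := fun u => u.elim 1 (fun i => if i = 0 then 3 else 2)
            with hg
          have w0 : weightD (starArc 2 σ) {1} g (some 0) = 0 := by
            rw [weight_some, h0]; simp
          have w1 : weightD (starArc 2 σ) {1} g (some 1) = 1 := by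
            rw [weight_some, h1]; simp [hg]
          have wn : weightD (starArc 2 σ) {1} g none = 3 := by
            rw [weight_none, Fin.sum_univ_two, h0, h1]; simp [hg]
          intro u v h
          rcases u with _ | i <;> rcases v with _ | j
          · rfl
          · fin_cases j <;> simp_all
          · fin_cases i <;> simp_all
          · fin_cases i <;> fin_cases j <;> simp_all
      · simp [h0, h1] at ht
end

section
/- For every n ≥ 1 and every orientation, the oriented star K⃗_{1,n} is {0,1}-antimagic. -/
lemma mem01_iff {V : Type*} (A : V → V → Prop) (u v : V) :
    (∃ k ∈ ({0,1} : Set ℕ), distEq A u v k) ↔ (u = v ∨ A u v) := by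
  constructor
  · rintro ⟨k, hk, h⟩
    simp only [Set.mem_insert_iff, Set.mem_singleton_iff] at hk
    rcases hk with rfl | rfl
    · exact Or.inl h.1
    · obtain ⟨w, hw, rfl⟩ := h.1
      exact Or.inr hw
  · intro h
    by_cases huv : u = v
    · exact ⟨0, by simp, huv, by omega⟩
    · rcases h with h | h
      · exact absurd h huv
      · refine ⟨1, by simp, ⟨v, h, rfl⟩, ?_⟩
        intro j hj
        interval_cases j
        exact huv

lemma weightD01_eq {V : Type*} [Fintype V] [DecidableEq V] (A : V → V → Prop)
    [∀ a b, Decidable (A a b)] (g : V → ℕ) (u : V) :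
    weightD A {0,1} g u = ∑ v : V, if u = v ∨ A u v then g v else 0 := by
  classical
  unfold weightD
  exact Finset.sum_congr rfl fun v _ => if_congr (mem01_iff A u v) rfl rfl

lemma starArc_none_some (n : ℕ) (σ : Fin n → Bool) (j : Fin n) :
    starArc n σ none (some j) ↔ σ j = false := by
  simp [starArc]

lemma starArc_some_none (n : ℕ) (σ : Fin n → Bool) (i : Fin n) :
    starArc n σ (some i) none ↔ σ i = true := by
  simp [starArc]

lemma starArc_some_some (n : ℕ) (σ : Fin n → Bool) (i j : Fin n) :
    ¬ starArc n σ (some i) (some j) := by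
  simp [starArc]

lemma starArc_none_none (n : ℕ) (σ : Fin n → Bool) :
    ¬ starArc n σ none none := by
  simp [starArc]

/-- For every `n ≥ 1` and every orientation, the oriented star
`K⃗_{1,n}` is `{0,1}`-antimagic. -/
theorem orientedStar_zeroOne_antimagic (n : ℕ) (hn : 1 ≤ n) (σ : Fin n → Bool) :
    IsDAntimagic (starArc n σ) {0, 1} := by
  classical
  set t := Fintype.card {i : Fin n // σ i = true} with ht
  set f := Fintype.card {i : Fin n // σ i = false} with hf
  have e1 := Fintype.equivFin {i : Fin n // σ i = true}
  have e2 := Fintype.equivFin {i : Fin n // σ i = false}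
  have htf : t + f = n := by
    have h1 : Fintype.card {i : Fin n // ¬ σ i = true} = f := by
      rw [hf]
      exact Fintype.card_congr (Equiv.subtypeEquivRight (fun i => by simp))
    have := Fintype.card_congr (Equiv.sumCompl (fun i : Fin n => σ i = true))
    simp only [Fintype.card_sum, Fintype.card_fin] at this
    omega
  set g : Option (Fin n) → ℕ := fun u =>
    match u with
    | none => n + 1
    | some i =>
      if h : σ i = true then (e1 ⟨i, h⟩).val + 1
      else t + (e2 ⟨i, by simpa using h⟩).val + 1
    with hg
  have hgnone : g none = n + 1 := rfl
  have hgT' : ∀ (i : Fin n) (h : σ i = true), g (some i) = (e1 ⟨i, h⟩).val + 1 :=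
    fun i h => dif_pos h
  have hgF' : ∀ (i : Fin n) (h : σ i = false), g (some i) = t + (e2 ⟨i, h⟩).val + 1 :=
    fun i h => dif_neg (by simp [h])
  -- bounds on labels
  have hgT : ∀ i : Fin n, σ i = true → 1 ≤ g (some i) ∧ g (some i) ≤ t := by
    intro i hi
    rw [hgT' i hi]
    have h2 : ((e1 ⟨i, hi⟩ : Fin t) : ℕ) < t := (e1 ⟨i, hi⟩).isLt
    omega
  have hgF : ∀ i : Fin n, σ i = false → t + 1 ≤ g (some i) ∧ g (some i) ≤ n := by
    intro i hi
    rw [hgF' i hi]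
    have h2 : ((e2 ⟨i, hi⟩ : Fin f) : ℕ) < f := (e2 ⟨i, hi⟩).isLt
    omega
  have hg_le : ∀ u, 1 ≤ g u ∧ g u ≤ n + 1 := by
    intro u
    match u with
    | none => rw [hgnone]; omega
    | some i =>
      cases hσ : σ i with
      | true => have := hgT i hσ; omega
      | false => have := hgF i hσ; omega
  have hg_some_le : ∀ i : Fin n, g (some i) ≤ n := by
    intro i
    cases hσ : σ i with
    | true => have := hgT i hσ; omega
    | false => exact (hgF i hσ).2
  -- injectivity of g
  have hg_inj : Function.Injective g := by
    intro u v huv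
    match u, v with
    | none, none => rfl
    | none, some j =>
      exfalso
      have := hg_some_le j
      rw [hgnone] at huv
      omega
    | some j, none =>
      exfalso
      have := hg_some_le j
      rw [hgnone] at huv
      omega
    | some i, some j =>
      cases hi : σ i with
      | true =>
        cases hj : σ j with
        | true =>
          rw [hgT' i hi, hgT' j hj] at huv
          have hval : ((e1 ⟨i, hi⟩ : Fin t) : ℕ) = ((e1 ⟨j, hj⟩ : Fin t) : ℕ) := by omega
          have h2 : (⟨i, hi⟩ : {i : Fin n // σ i = true}) = ⟨j, hj⟩ :=
            e1.injective (Fin.ext hval)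
          exact congrArg some (congrArg Subtype.val h2)
        | false =>
          exfalso
          have := hgT i hi
          have := hgF j hj
          omega
      | false =>
        cases hj : σ j with
        | true =>
          exfalso
          have := hgF i hi
          have := hgT j hj
          omega
        | false =>
          rw [hgF' i hi, hgF' j hj] at huv
          have hval : ((e2 ⟨i, hi⟩ : Fin f) : ℕ) = ((e2 ⟨j, hj⟩ : Fin f) : ℕ) := by omega
          have h2 : (⟨i, hi⟩ : {i : Fin n // σ i = false}) = ⟨j, hj⟩ :=
            e2.injective (Fin.ext hval)
          exact congrArg some (congrArg Subtype.val h2)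
  refine ⟨g, ?_, ?_⟩
  · -- BijOn
    have hcard : Fintype.card (Option (Fin n)) = n + 1 := by simp
    rw [hcard]
    have himg : Finset.image g Finset.univ = Finset.Icc 1 (n + 1) := by
      apply Finset.eq_of_subset_of_card_le
      · intro x hx
        simp only [Finset.mem_image, Finset.mem_univ, true_and] at hx
        obtain ⟨u, rfl⟩ := hx
        simp only [Finset.mem_Icc]
        exact hg_le u
      · rw [Finset.card_image_of_injective _ hg_inj, Nat.card_Icc]
        simp
    refine ⟨?_, ?_, ?_⟩
    · intro u _
      simp only [Set.mem_Icc]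
      exact hg_le u
    · exact fun u _ v _ h => hg_inj h
    · intro x hx
      simp only [Set.mem_Icc] at hx
      have : x ∈ Finset.image g Finset.univ := by
        rw [himg]; simp only [Finset.mem_Icc]; exact hx
      simp only [Finset.mem_image, Finset.mem_univ, true_and] at this
      obtain ⟨u, hu⟩ := this
      exact ⟨u, Set.mem_univ u, hu⟩
  · -- injectivity of weights
    set S : ℕ := ∑ j : Fin n, if σ j = false then g (some j) else 0 with hS
    have wnone : weightD (starArc n σ) {0,1} g none = (n + 1) + S := by
      rw [weightD01_eq, Fintype.sum_option]
      have h0 : ((none : Option (Fin n)) = none ∨ starArc n σ none none) := Or.inl rfl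
      rw [hS]
      congr 1
      exact Finset.sum_congr rfl fun j _ =>
        if_congr (by simp [starArc_none_some]) rfl rfl
    have wtrue : ∀ i : Fin n, σ i = true →
        weightD (starArc n σ) {0,1} g (some i) = (n + 1) + g (some i) := by
      intro i hi
      rw [weightD01_eq, Fintype.sum_option]
      have h0 : (some i = (none : Option (Fin n)) ∨ starArc n σ (some i) none) :=
        Or.inr ((starArc_some_none n σ i).2 hi)
      congr 1
      · exact if_pos h0
      · trans (∑ j : Fin n, if j = i then g (some j) else 0)
        · exact Finset.sum_congr rfl fun j _ =>
            if_congr (by simp [starArc_some_some, eq_comm]) rfl rfl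
        · rw [Finset.sum_ite_eq' Finset.univ i (fun j => g (some j)),
            if_pos (Finset.mem_univ i)]
    have wfalse : ∀ i : Fin n, σ i = false →
        weightD (starArc n σ) {0,1} g (some i) = g (some i) := by
      intro i hi
      rw [weightD01_eq, Fintype.sum_option]
      have h0 : ¬ (some i = (none : Option (Fin n)) ∨ starArc n σ (some i) none) := by
        rintro (h | h)
        · exact Option.some_ne_none i h
        · rw [starArc_some_none] at h
          simp [hi] at h
      trans ((0 : ℕ) + ∑ j : Fin n, if j = i then g (some j) else 0)
      · congr 1
        · exact if_neg h0
        · exact Finset.sum_congr rfl fun j _ =>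
            if_congr (by simp [starArc_some_some, eq_comm]) rfl rfl
      · rw [zero_add, Finset.sum_ite_eq' Finset.univ i (fun j => g (some j)),
          if_pos (Finset.mem_univ i)]
    -- bounds on S
    have hSbound : (∀ j : Fin n, σ j = true) → S = 0 := by
      intro h
      rw [hS]
      exact Finset.sum_eq_zero fun j _ => by simp [h j]
    have hSbig : (∃ j : Fin n, σ j = false) → t + 1 ≤ S := by
      rintro ⟨j, hj⟩
      have h1 : t + 1 ≤ g (some j) := (hgF j hj).1
      have h2 : (if σ j = false then g (some j) else 0) ≤ S := by
        rw [hS]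
        exact Finset.single_le_sum
          (f := fun k : Fin n => if σ k = false then g (some k) else 0)
          (fun k _ => Nat.zero_le _) (Finset.mem_univ j)
      rw [if_pos hj] at h2
      omega
    have hScases : S = 0 ∨ t + 1 ≤ S := by
      by_cases hex : ∃ j : Fin n, σ j = false
      · exact Or.inr (hSbig hex)
      · refine Or.inl (hSbound fun j => ?_)
        cases h : σ j with
        | true => rfl
        | false => exact absurd ⟨j, h⟩ hex
    intro u v huv
    match u, v with
    | none, none => rfl
    | some i, some j =>
      cases hi : σ i with
      | true =>
        cases hj : σ j with
        | true =>
          rw [wtrue i hi, wtrue j hj] at huv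
          have h2 : g (some i) = g (some j) := by omega
          exact hg_inj h2
        | false =>
          exfalso
          rw [wtrue i hi, wfalse j hj] at huv
          have := hgT i hi
          have := hgF j hj
          omega
      | false =>
        cases hj : σ j with
        | true =>
          exfalso
          rw [wfalse i hi, wtrue j hj] at huv
          have := hgF i hi
          have := hgT j hj
          omega
        | false =>
          rw [wfalse i hi, wfalse j hj] at huv
          exact hg_inj huv
    | none, some i =>
      exfalso
      rw [wnone] at huv
      cases hi : σ i with
      | true =>
        rw [wtrue i hi] at huv
        have := hgT i hi
        omega
      | false =>
        rw [wfalse i hi] at huv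
        have := hgF i hi
        have := hSbig ⟨i, hi⟩
        omega
    | some i, none =>
      exfalso
      rw [wnone] at huv
      cases hi : σ i with
      | true =>
        rw [wtrue i hi] at huv
        have := hgT i hi
        omega
      | false =>
        rw [wfalse i hi] at huv
        have := hgF i hi
        have := hSbig ⟨i, hi⟩
        omega
end

section
/- For every n ≥ 1 and every orientation, the oriented star K⃗_{1,n} is not {2}-antimagic. -/
/-! A walk of length two in an oriented star must run from a source leaf through the centre to
a sink leaf. Hence the centre has an empty `{2}`-neighbourhood, and so does some leaf: a sink
leaf if there is one, and otherwise any leaf. Both therefore have `{2}`-weight `0`. -/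

lemma weightD_singleton_eq_zero {V : Type*} [Fintype V] {A : V → V → Prop} {k : ℕ}
    (g : V → ℕ) {u : V} (h : ∀ v, ¬ relPow A k u v) : weightD A {k} g u = 0 := by
  refine Finset.sum_eq_zero fun v _ => if_neg ?_
  rintro ⟨_, rfl, hwalk, -⟩
  exact h v hwalk

lemma starArc_relPow_two {n : ℕ} {σ : Fin n → Bool} {u v : Option (Fin n)} :
    relPow (starArc n σ) 2 u v ↔
      ∃ i j, u = some i ∧ v = some j ∧ σ i = true ∧ σ j = false := by
  constructor
  · rintro ⟨w, ⟨i, ⟨rfl, rfl, hi⟩ | ⟨rfl, rfl, hi⟩⟩, x, ⟨j, hj⟩, rfl : x = v⟩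
    · rcases hj with ⟨⟨⟩, -, -⟩ | ⟨-, rfl, hj⟩
      exact ⟨i, j, rfl, rfl, hi, hj⟩
    · rcases hj with ⟨hij, -, hj⟩ | ⟨⟨⟩, -, -⟩
      rw [Option.some_inj.mp hij, hj] at hi
      exact absurd hi.symm Bool.false_ne_true
  · rintro ⟨i, j, rfl, rfl, hi, hj⟩
    exact ⟨none, ⟨i, .inl ⟨rfl, rfl, hi⟩⟩, some j, ⟨j, .inr ⟨rfl, rfl, hj⟩⟩, rfl⟩

lemma starArc_exists_leaf_not_relPow_two {n : ℕ} (hn : 1 ≤ n) (σ : Fin n → Bool) :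
    ∃ i, ∀ v, ¬ relPow (starArc n σ) 2 (some i) v := by
  by_cases hsink : ∃ j, σ j = false
  · obtain ⟨j, hj⟩ := hsink
    refine ⟨j, fun v hv => ?_⟩
    obtain ⟨i, -, hji, -, hsrc, -⟩ := starArc_relPow_two.mp hv
    rw [← Option.some_inj.mp hji, hj] at hsrc
    exact Bool.false_ne_true hsrc
  · refine ⟨⟨0, hn⟩, fun v hv => hsink ?_⟩
    obtain ⟨-, j, -, -, -, hj⟩ := starArc_relPow_two.mp hv
    exact ⟨j, hj⟩

/-- For every `n ≥ 1` and every orientation, the oriented star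
`K⃗_{1,n}` is not `{2}`-antimagic. -/
theorem orientedStar_not_two_antimagic (n : ℕ) (hn : 1 ≤ n) (σ : Fin n → Bool) :
    ¬ IsDAntimagic (starArc n σ) {2} := by
  rintro ⟨g, -, hinj⟩
  have hcentre : weightD (starArc n σ) {2} g none = 0 :=
    weightD_singleton_eq_zero g fun v hv => by simp [starArc_relPow_two] at hv
  obtain ⟨i, hi⟩ := starArc_exists_leaf_not_relPow_two hn σ
  have hleaf : weightD (starArc n σ) {2} g (some i) = 0 := weightD_singleton_eq_zero g hi
  exact Option.some_ne_none i (hinj (hleaf.trans hcentre.symm))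
end

section
/- If an oriented star forest (a disjoint union of at least two oriented stars) is D-antimagic for some nonempty set D of nonnegative integers, then min(D) = 0. -/
/-- An oriented star forest with `c` components: component `j` is an oriented star
with `n j` leaves; `σ j i = true` iff leaf `i` of component `j` is a source. -/
def forestArc {c : ℕ} (n : Fin c → ℕ) (σ : ∀ j, Fin (n j) → Bool) :
    (Σ j : Fin c, Option (Fin (n j))) → (Σ j : Fin c, Option (Fin (n j))) → Prop :=
  fun u w => ∃ (j : Fin c) (i : Fin (n j)),
    (u = ⟨j, some i⟩ ∧ w = ⟨j, none⟩ ∧ σ j i = true) ∨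
    (u = ⟨j, none⟩ ∧ w = ⟨j, some i⟩ ∧ σ j i = false)

lemma sink_weight_zero {V : Type*} [Fintype V] (A : V → V → Prop) (D : Set ℕ)
    (hD : 0 ∉ D) (g : V → ℕ) (u : V) (hu : IsSink A u) : weightD A D g u = 0 := by
  unfold weightD
  apply Finset.sum_eq_zero
  intro v _
  rw [if_neg]
  rintro ⟨k, hk, hrel, -⟩
  cases k with
  | zero => exact hD hk
  | succ k =>
    obtain ⟨w, hw, -⟩ := hrel
    exact hu w hw

lemma exists_sink {c : ℕ} (n : Fin c → ℕ) (σ : ∀ j, Fin (n j) → Bool) (j : Fin c) :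
    ∃ x : Option (Fin (n j)), IsSink (forestArc n σ) ⟨j, x⟩ := by
  by_cases h : ∃ i, σ j i = false
  · obtain ⟨i, hi⟩ := h
    refine ⟨some i, ?_⟩
    rintro ⟨j', x⟩ ⟨j₂, i₂, ⟨h1, h2, h3⟩ | ⟨h1, h2, h3⟩⟩
    · obtain ⟨rfl, h1'⟩ := Sigma.mk.inj_iff.mp h1
      rw [heq_eq_eq, Option.some.injEq] at h1'
      subst h1'
      rw [hi] at h3
      exact Bool.false_ne_true h3
    · obtain ⟨rfl, h1'⟩ := Sigma.mk.inj_iff.mp h1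
      rw [heq_eq_eq] at h1'
      exact Option.some_ne_none i h1'
  · push_neg at h
    refine ⟨none, ?_⟩
    rintro ⟨j', x⟩ ⟨j₂, i₂, ⟨h1, h2, h3⟩ | ⟨h1, h2, h3⟩⟩
    · obtain ⟨rfl, h1'⟩ := Sigma.mk.inj_iff.mp h1
      rw [heq_eq_eq] at h1'
      exact Option.some_ne_none i₂ h1'.symm
    · obtain ⟨rfl, -⟩ := Sigma.mk.inj_iff.mp h1
      exact h i₂ h3

/-- If an oriented star forest (a disjoint union of at least two oriented
stars) is `D`-antimagic for some nonempty `D ⊆ ℕ`, then `min(D) = 0`. -/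
theorem orientedStarForest_antimagic_min_eq_zero {c : ℕ} (hc : 2 ≤ c)
    (n : Fin c → ℕ) (hn : ∀ j, 1 ≤ n j) (σ : ∀ j, Fin (n j) → Bool)
    (D : Set ℕ) (hD : D.Nonempty)
    (h : IsDAntimagic (forestArc n σ) D) : sInf D = 0 := by
  by_contra h0
  have hD0 : 0 ∉ D := fun h' => h0 (Nat.sInf_eq_zero.mpr (Or.inl h'))
  obtain ⟨g, hg, hinj⟩ := h
  obtain ⟨x0, hx0⟩ := exists_sink n σ ⟨0, by omega⟩
  obtain ⟨x1, hx1⟩ := exists_sink n σ ⟨1, by omega⟩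
  have heq : (⟨⟨0, by omega⟩, x0⟩ : Σ j : Fin c, Option (Fin (n j))) =
      ⟨⟨1, by omega⟩, x1⟩ := by
    apply hinj
    rw [sink_weight_zero _ _ hD0 _ _ hx0, sink_weight_zero _ _ hD0 _ _ hx1]
  have := (Sigma.mk.inj_iff.mp heq).1
  simp [Fin.ext_iff] at this
end

section
/- Let S = ⋃_{j=1}^{τ} m_j K_{1,n_j} be a star forest with τ ≥ 1, 1 ≤ n_1 < n_2 < ⋯ < n_τ, m_j ≥ 1, and Σ_{j=1}^{τ} m_j ≥ 2. Then there exists an orientation of S under which S is {0,1}-antimagic. -/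
/-- The star forest `S = ⋃_{j} m_j K_{1,n_j}` with orientation `σ`: vertex
`⟨j, (s, none)⟩` is the center of the `s`-th copy of `K_{1,n j}` and
`⟨j, (s, some i)⟩` its `i`-th leaf; `σ j s i = true` iff that leaf is a source. -/
def sForestArc {τ : ℕ} (m n : Fin τ → ℕ) (σ : ∀ j, Fin (m j) → Fin (n j) → Bool) :
    (Σ j : Fin τ, Fin (m j) × Option (Fin (n j))) →
    (Σ j : Fin τ, Fin (m j) × Option (Fin (n j))) → Prop :=
  fun u w => ∃ (j : Fin τ) (s : Fin (m j)) (i : Fin (n j)),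
    (u = ⟨j, (s, some i)⟩ ∧ w = ⟨j, (s, none)⟩ ∧ σ j s i = true) ∨
    (u = ⟨j, (s, none)⟩ ∧ w = ⟨j, (s, some i)⟩ ∧ σ j s i = false)

lemma sum_filter_lt_add_le {τ : ℕ} (f : Fin τ → ℕ) (j : Fin τ) :
    (∑ t ∈ Finset.univ.filter (· < j), f t) + f j ≤ ∑ t, f t := by
  rw [add_comm, ← Finset.sum_insert (by simp)]
  exact Finset.sum_le_sum_of_subset (Finset.subset_univ _)

lemma sum_filter_lt_add_le' {τ : ℕ} (f : Fin τ → ℕ) {j j' : Fin τ} (h : j < j') :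
    (∑ t ∈ Finset.univ.filter (· < j), f t) + f j ≤ ∑ t ∈ Finset.univ.filter (· < j'), f t := by
  rw [add_comm, ← Finset.sum_insert (by simp)]
  apply Finset.sum_le_sum_of_subset
  intro t ht
  simp only [Finset.mem_insert, Finset.mem_filter, Finset.mem_univ, true_and] at *
  rcases ht with rfl | ht
  · exact h
  · exact ht.trans h

lemma mul_add_lt' {a b c d : ℕ} (hc : c < a) (hd : d < b) : c * b + d < a * b :=
  calc c * b + d < c * b + b := by omega
  _ = (c + 1) * b := by ring
  _ ≤ a * b := Nat.mul_le_mul_right _ hc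

lemma mul_add_inj {q s s' i i' : ℕ} (hi : i < q) (hi' : i' < q)
    (h : s * q + i = s' * q + i') : s = s' ∧ i = i' := by
  have hss : s = s' := by
    rcases lt_trichotomy s s' with hlt | he | hgt
    · have h3 : s * q + i < s' * q := mul_add_lt' hlt hi
      omega
    · exact he
    · have h3 : s' * q + i' < s * q := mul_add_lt' hgt hi'
      omega
  subst hss
  omega

lemma blocks_inj {τ : ℕ} (m q : Fin τ → ℕ)
    {j j' : Fin τ} {s s' i i' : ℕ}
    (hs : s < m j) (hs' : s' < m j') (hi : i < q j) (hi' : i' < q j')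
    (h : (∑ t ∈ Finset.univ.filter (· < j), m t * q t) + (s * q j + i)
       = (∑ t ∈ Finset.univ.filter (· < j'), m t * q t) + (s' * q j' + i')) :
    j = j' ∧ s = s' ∧ i = i' := by
  have key : ∀ (a b : Fin τ), a < b → ∀ (sa ia : ℕ), sa < m a → ia < q a →
      (∑ t ∈ Finset.univ.filter (· < a), m t * q t) + (sa * q a + ia)
      < (∑ t ∈ Finset.univ.filter (· < b), m t * q t) := by
    intro a b hab sa ia hsa hia
    have h1 : sa * q a + ia < m a * q a := mul_add_lt' hsa hia
    have h2 := sum_filter_lt_add_le' (fun t => m t * q t) hab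
    omega
  have hjj : j = j' := by
    rcases lt_trichotomy j j' with hlt | he | hgt
    · have := key j j' hlt s i hs hi; omega
    · exact he
    · have := key j' j hgt s' i' hs' hi'; omega
  subst hjj
  have h5 : s * q j + i = s' * q j + i' := by omega
  exact ⟨rfl, mul_add_inj hi hi' h5⟩


def labelG' {τ : ℕ} (m n : Fin τ → ℕ) :
    (Σ j : Fin τ, Fin (m j) × Option (Fin (n j))) → ℕ
  | ⟨j, (s, none)⟩ => (∑ t ∈ Finset.univ.filter (· < j), m t) + ((s : ℕ) + 1)
  | ⟨j, (s, some i)⟩ =>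
      (∑ t, m t) + ((∑ t ∈ Finset.univ.filter (· < j), m t * n t)
        + ((s : ℕ) * n j + (i : ℕ)) + 1)

@[simp] lemma labelG'_center {τ : ℕ} (m n : Fin τ → ℕ) (j : Fin τ) (s : Fin (m j)) :
    labelG' m n ⟨j, (s, none)⟩ = (∑ t ∈ Finset.univ.filter (· < j), m t) + ((s : ℕ) + 1) := rfl

@[simp] lemma labelG'_leaf {τ : ℕ} (m n : Fin τ → ℕ) (j : Fin τ) (s : Fin (m j)) (i : Fin (n j)) :
    labelG' m n ⟨j, (s, some i)⟩ = (∑ t, m t) + ((∑ t ∈ Finset.univ.filter (· < j), m t * n t)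
        + ((s : ℕ) * n j + (i : ℕ)) + 1) := rfl

lemma distcond {V : Type*} (A : V → V → Prop) (u v : V) :
    (∃ k ∈ ({0, 1} : Set ℕ), distEq A u v k) ↔ (u = v ∨ A u v) := by
  constructor
  · rintro ⟨k, hk, hdist⟩
    simp only [Set.mem_insert_iff, Set.mem_singleton_iff] at hk
    rcases hk with rfl | rfl
    · exact Or.inl hdist.1
    · obtain ⟨w, haw, hwv⟩ := hdist.1
      have hwv' : w = v := hwv
      subst hwv'
      exact Or.inr haw
  · rintro (rfl | hA)
    · exact ⟨0, by simp, rfl, fun j hj => absurd hj (Nat.not_lt_zero j)⟩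
    · by_cases he : u = v
      · exact ⟨0, by simp, he, fun j hj => absurd hj (Nat.not_lt_zero j)⟩
      · refine ⟨1, by simp, ⟨v, hA, rfl⟩, ?_⟩
        intro j hj
        interval_cases j
        exact he

lemma arc_true_iff {τ : ℕ} (m n : Fin τ → ℕ) (u w) :
    sForestArc m n (fun _ _ _ => true) u w ↔
      ∃ (j : Fin τ) (s : Fin (m j)) (i : Fin (n j)),
        u = ⟨j, (s, some i)⟩ ∧ w = ⟨j, (s, none)⟩ := by
  simp [sForestArc]

lemma no_arc_from_center {τ : ℕ} (m n : Fin τ → ℕ) {j : Fin τ} {s : Fin (m j)} (v) :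
    ¬ sForestArc m n (fun _ _ _ => true) ⟨j, (s, none)⟩ v := by
  rw [arc_true_iff]
  rintro ⟨j', s', i', h1, -⟩
  simp only [Sigma.ext_iff] at h1
  obtain ⟨rfl, h2⟩ := h1
  simp at h2

lemma arc_from_leaf {τ : ℕ} (m n : Fin τ → ℕ) {j : Fin τ} {s : Fin (m j)} {i : Fin (n j)} (v) :
    sForestArc m n (fun _ _ _ => true) ⟨j, (s, some i)⟩ v ↔ v = ⟨j, (s, none)⟩ := by
  rw [arc_true_iff]
  constructor
  · rintro ⟨j', s', i', h1, h2⟩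
    simp only [Sigma.ext_iff] at h1
    obtain ⟨rfl, h3⟩ := h1
    rw [heq_eq_eq, Prod.mk.injEq] at h3
    obtain ⟨rfl, h4⟩ := h3
    rw [h2]
  · rintro rfl
    exact ⟨j, s, i, rfl, rfl⟩

lemma weight_center {τ : ℕ} (m n : Fin τ → ℕ)
    (g : (Σ j : Fin τ, Fin (m j) × Option (Fin (n j))) → ℕ) (j : Fin τ) (s : Fin (m j)) :
    weightD (sForestArc m n (fun _ _ _ => true)) {0, 1} g ⟨j, (s, none)⟩
      = g ⟨j, (s, none)⟩ := by
  classical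
  unfold weightD
  have h0 : ∀ v, (∃ k ∈ ({0, 1} : Set ℕ),
      distEq (sForestArc m n (fun _ _ _ => true)) ⟨j, (s, none)⟩ v k)
      ↔ (⟨j, (s, none)⟩ : Σ j : Fin τ, Fin (m j) × Option (Fin (n j))) = v := by
    intro v
    rw [distcond]
    simp [no_arc_from_center m n v]
  simp only [h0]
  simp

lemma weight_leaf {τ : ℕ} (m n : Fin τ → ℕ)
    (g : (Σ j : Fin τ, Fin (m j) × Option (Fin (n j))) → ℕ) (j : Fin τ) (s : Fin (m j))
    (i : Fin (n j)) :
    weightD (sForestArc m n (fun _ _ _ => true)) {0, 1} g ⟨j, (s, some i)⟩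
      = g ⟨j, (s, some i)⟩ + g ⟨j, (s, none)⟩ := by
  classical
  unfold weightD
  have hne : (⟨j, (s, some i)⟩ : Σ j : Fin τ, Fin (m j) × Option (Fin (n j))) ≠ ⟨j, (s, none)⟩ := by
    simp
  have h0 : ∀ v, (∃ k ∈ ({0, 1} : Set ℕ),
      distEq (sForestArc m n (fun _ _ _ => true)) ⟨j, (s, some i)⟩ v k)
      ↔ ((⟨j, (s, some i)⟩ : Σ j : Fin τ, Fin (m j) × Option (Fin (n j))) = v
          ∨ (⟨j, (s, none)⟩ : Σ j : Fin τ, Fin (m j) × Option (Fin (n j))) = v) := by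
    intro v
    rw [distcond, arc_from_leaf]
    constructor
    · rintro (rfl | rfl)
      · exact Or.inl rfl
      · exact Or.inr rfl
    · rintro (rfl | rfl)
      · exact Or.inl rfl
      · exact Or.inr rfl
  simp only [h0]
  have hsum : ∀ v ∈ (Finset.univ : Finset (Σ j : Fin τ, Fin (m j) × Option (Fin (n j)))),
      (if (⟨j, (s, some i)⟩ : Σ j : Fin τ, Fin (m j) × Option (Fin (n j))) = v
          ∨ (⟨j, (s, none)⟩ : Σ j : Fin τ, Fin (m j) × Option (Fin (n j))) = v then g v else 0)
      = (if (⟨j, (s, some i)⟩ : Σ j : Fin τ, Fin (m j) × Option (Fin (n j))) = v then g v else 0)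
        + (if (⟨j, (s, none)⟩ : Σ j : Fin τ, Fin (m j) × Option (Fin (n j))) = v then g v else 0) := by
    intro v _
    by_cases h1 : (⟨j, (s, some i)⟩ : Σ j : Fin τ, Fin (m j) × Option (Fin (n j))) = v
    · subst h1
      simp [Ne.symm hne, hne]
    · by_cases h2 : (⟨j, (s, none)⟩ : Σ j : Fin τ, Fin (m j) × Option (Fin (n j))) = v
      · subst h2
        simp [h1]
      · simp [h1, h2]
  rw [Finset.sum_congr rfl hsum, Finset.sum_add_distrib]
  simp


/-- For a star forest `S = ⋃_{j=1}^{τ} m_j K_{1,n_j}` with `τ ≥ 1`,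
`1 ≤ n_1 < ⋯ < n_τ`, `m_j ≥ 1` and `Σ m_j ≥ 2`, there exists an orientation of `S`
under which `S` is `{0,1}`-antimagic. -/
theorem starForest_exists_orientation_zeroOne_antimagic {τ : ℕ} (hτ : 1 ≤ τ) (m n : Fin τ → ℕ)
    (hn : ∀ j, 1 ≤ n j) (hmono : StrictMono n) (hm : ∀ j, 1 ≤ m j)
    (hsum : 2 ≤ ∑ j, m j) :
    ∃ σ : ∀ j, Fin (m j) → Fin (n j) → Bool,
      IsDAntimagic (sForestArc m n σ) {0, 1} := by
  classical
  have hcard : Fintype.card (Σ j : Fin τ, Fin (m j) × Option (Fin (n j)))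
      = (∑ t, m t) + (∑ t, m t * n t) := by
    simp only [Fintype.card_sigma, Fintype.card_prod, Fintype.card_option, Fintype.card_fin]
    rw [← Finset.sum_add_distrib]
    exact Finset.sum_congr rfl (fun t _ => by ring)
  have hub : ∀ v : (Σ j : Fin τ, Fin (m j) × Option (Fin (n j))),
      1 ≤ labelG' m n v ∧ labelG' m n v ≤ (∑ t, m t) + (∑ t, m t * n t) := by
    rintro ⟨j, s, (_ | i)⟩
    · simp only [labelG'_center]
      have h1 := sum_filter_lt_add_le m j
      have h2 := s.isLt
      omega
    · simp only [labelG'_leaf]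
      have h1 := sum_filter_lt_add_le (fun t => m t * n t) j
      have h2 : (s : ℕ) * n j + (i : ℕ) < m j * n j := mul_add_lt' s.isLt i.isLt
      omega
  have hinj : Function.Injective (labelG' m n) := by
    rintro ⟨j, s, (_ | i)⟩ ⟨j', s', (_ | i')⟩ h
    · simp only [labelG'_center] at h
      have h2 : (∑ t ∈ Finset.univ.filter (· < j), m t * 1) + ((s : ℕ) * 1 + 0)
          = (∑ t ∈ Finset.univ.filter (· < j'), m t * 1) + ((s' : ℕ) * 1 + 0) := by
        simp only [mul_one, add_zero]
        omega
      obtain ⟨rfl, hs, -⟩ := blocks_inj m (fun _ => 1) s.isLt s'.isLt Nat.one_pos Nat.one_pos h2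
      rw [Fin.ext hs]
    · exfalso
      simp only [labelG'_center, labelG'_leaf] at h
      have h1 := sum_filter_lt_add_le m j
      have h2 := s.isLt
      omega
    · exfalso
      simp only [labelG'_center, labelG'_leaf] at h
      have h1 := sum_filter_lt_add_le m j'
      have h2 := s'.isLt
      omega
    · simp only [labelG'_leaf] at h
      have h2 : (∑ t ∈ Finset.univ.filter (· < j), m t * n t) + ((s : ℕ) * n j + (i : ℕ))
          = (∑ t ∈ Finset.univ.filter (· < j'), m t * n t) + ((s' : ℕ) * n j' + (i' : ℕ)) := by
        omega
      obtain ⟨rfl, hs, hi⟩ := blocks_inj m n s.isLt s'.isLt i.isLt i'.isLt h2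
      rw [Fin.ext hs, Fin.ext hi]
  refine ⟨fun _ _ _ => true, labelG' m n, ⟨?_, hinj.injOn, ?_⟩, ?_⟩
  · intro v _
    rw [Set.mem_Icc, hcard]
    exact hub v
  · have himg : labelG' m n '' Set.univ
        = Set.Icc 1 (Fintype.card (Σ j : Fin τ, Fin (m j) × Option (Fin (n j)))) := by
      apply Set.eq_of_subset_of_ncard_le
      · rintro x ⟨v, -, rfl⟩
        rw [Set.mem_Icc, hcard]
        exact hub v
      · rw [Set.ncard_image_of_injOn hinj.injOn, Set.ncard_univ, Nat.card_eq_fintype_card,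
          ← Finset.coe_Icc, Set.ncard_coe_finset, Nat.card_Icc]
        omega
      · exact Set.finite_Icc _ _
    intro x hx
    rw [himg]
    exact hx
  · intro u v h
    rcases u with ⟨j, s, (_ | i)⟩ <;> rcases v with ⟨j', s', (_ | i')⟩
    · rw [weight_center, weight_center] at h
      exact hinj h
    · exfalso
      rw [weight_center, weight_leaf] at h
      simp only [labelG'_center, labelG'_leaf] at h
      have h1 := sum_filter_lt_add_le m j
      have h2 := s.isLt
      omega
    · exfalso
      rw [weight_leaf, weight_center] at h
      simp only [labelG'_center, labelG'_leaf] at h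
      have h1 := sum_filter_lt_add_le m j'
      have h2 := s'.isLt
      omega
    · rw [weight_leaf, weight_leaf] at h
      simp only [labelG'_center, labelG'_leaf] at h
      have e1 : ∀ jj : Fin τ, (∑ t ∈ Finset.univ.filter (· < jj), m t * (n t + 1))
          = (∑ t ∈ Finset.univ.filter (· < jj), m t * n t)
            + (∑ t ∈ Finset.univ.filter (· < jj), m t) := by
        intro jj
        rw [← Finset.sum_add_distrib]
        exact Finset.sum_congr rfl (fun t _ => by ring)
      have h2 : (∑ t ∈ Finset.univ.filter (· < j), m t * (n t + 1))
            + ((s : ℕ) * (n j + 1) + (i : ℕ))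
          = (∑ t ∈ Finset.univ.filter (· < j'), m t * (n t + 1))
            + ((s' : ℕ) * (n j' + 1) + (i' : ℕ)) := by
        rw [e1, e1]
        have e2 : (s : ℕ) * (n j + 1) = (s : ℕ) * n j + s := by ring
        have e3 : (s' : ℕ) * (n j' + 1) = (s' : ℕ) * n j' + s' := by ring
        omega
      obtain ⟨rfl, hs, hi⟩ := blocks_inj m (fun t => n t + 1) s.isLt s'.isLt
        (Nat.lt_succ_of_lt i.isLt) (Nat.lt_succ_of_lt i'.isLt) h2
      rw [Fin.ext hs, Fin.ext hi]
end

section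
/- In any orientation of the star K_{1,n} with n ≥ 3, the oriented star K⃗_{1,n} is not {1}-antimagic. -/
lemma star_cond (n : ℕ) (σ : Fin n → Bool) (i : Fin n) (v : Option (Fin n)) :
    (∃ k ∈ ({1} : Set ℕ), distEq (starArc n σ) (some i) v k) ↔ (v = none ∧ σ i = true) := by
  constructor
  · rintro ⟨k, hk, h1, -⟩
    rw [Set.mem_singleton_iff] at hk
    subst hk
    obtain ⟨w, hw, hwv⟩ := h1
    simp only [relPow] at hwv
    subst hwv
    obtain ⟨i', h⟩ := hw
    rcases h with ⟨h1, h2, h3⟩ | ⟨h1, -⟩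
    · obtain rfl : i = i' := by simpa using h1
      exact ⟨h2, h3⟩
    · simp at h1
  · rintro ⟨rfl, hσ⟩
    refine ⟨1, rfl, ⟨none, ⟨i, Or.inl ⟨rfl, rfl, hσ⟩⟩, rfl⟩, ?_⟩
    intro j hj
    interval_cases j
    simp [relPow]

/-- In any orientation of the star `K_{1,n}` with `n ≥ 3`, the oriented
star `K⃗_{1,n}` is not `{1}`-antimagic. -/
theorem orientedStar_not_one_antimagic_of_three_le (n : ℕ) (hn : 3 ≤ n)
    (σ : Fin n → Bool) :
    ¬ IsDAntimagic (starArc n σ) {1} := by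
  rintro ⟨g, -, hinj⟩
  obtain ⟨i, j, hij, hne⟩ : ∃ i j : Fin n, σ i = σ j ∧ i ≠ j := by
    have h : ¬ Function.Injective σ := by
      intro h
      have := Fintype.card_le_of_injective σ h
      simp at this; omega
    simp only [Function.Injective, not_forall] at h
    obtain ⟨i, j, h1, h2⟩ := h
    exact ⟨i, j, h1, h2⟩
  apply hne
  have : weightD (starArc n σ) {1} g (some i) = weightD (starArc n σ) {1} g (some j) := by
    unfold weightD
    apply Finset.sum_congr rfl
    intro v _
    congr 1
    simp only [star_cond, hij]
  have := hinj this
  simpa using this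
end

section
/- If an oriented star K⃗_{1,n} with n ≥ 2 is {1,2}-antimagic, then it has exactly one leaf that is a sink and exactly one leaf that is a source; in particular n = 2. -/
/-!
A sink leaf has no out-arcs, so its `D`-neighbourhood is empty once `0 ∉ D`. All source leaves
have the single out-neighbour `none` and cannot be reached from anywhere, so they share one
`D`-neighbourhood. Injective weights therefore allow at most one sink and at most one source
leaf: the orientation `σ : Fin n → Bool` is injective, whence `n ≤ 2`.
-/

section DWeight

variable {V : Type*} {A : V → V → Prop}

lemma not_isSource_of_relPow_succ {k : ℕ} {u v : V} (h : relPow A (k + 1) u v) :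
    ¬IsSource A v := by
  induction k generalizing u with
  | zero =>
    obtain ⟨w, huw, rfl⟩ := h
    exact fun hv => hv u huw
  | succ k ih =>
    obtain ⟨w, -, hwv⟩ := h
    exact ih hwv

lemma not_distEq_of_isSource {x y : V} {k : ℕ} (hk : k ≠ 0) (hy : IsSource A y) :
    ¬distEq A x y k := by
  obtain ⟨k, rfl⟩ := Nat.exists_eq_succ_of_ne_zero hk
  exact fun h => not_isSource_of_relPow_succ h.1 hy

lemma relPow_iff_of_forall_adj_iff {u u' v : V} (hA : ∀ w, A u w ↔ A u' w) (hu : v ≠ u)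
    (hu' : v ≠ u') : ∀ j, relPow A j u v ↔ relPow A j u' v
  | 0 => ⟨fun h => absurd h.symm hu, fun h => absurd h.symm hu'⟩
  | _ + 1 => exists_congr fun w => and_congr_left' (hA w)

lemma distEq_iff_of_forall_adj_iff {u u' v : V} (hA : ∀ w, A u w ↔ A u' w) (hu : v ≠ u)
    (hu' : v ≠ u') (k : ℕ) : distEq A u v k ↔ distEq A u' v k := by
  simp only [distEq, relPow_iff_of_forall_adj_iff hA hu hu']

variable [Fintype V] {D : Set ℕ} {g : V → ℕ}

lemma weightD_congr {u u' : V}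
    (h : ∀ v, (∃ k ∈ D, distEq A u v k) ↔ (∃ k ∈ D, distEq A u' v k)) :
    weightD A D g u = weightD A D g u' := by
  unfold weightD
  exact Finset.sum_congr rfl fun v _ => by congr 1; exact propext (h v)

lemma weightD_eq_zero_of_isSink (hD : 0 ∉ D) {u : V} (hu : IsSink A u) :
    weightD A D g u = 0 := by
  refine Finset.sum_eq_zero fun v _ => if_neg ?_
  rintro ⟨k, hk, hrel, -⟩
  cases k with
  | zero => exact hD hk
  | succ k =>
    obtain ⟨w, huw, -⟩ := hrel
    exact hu w huw

/-- Two sources with the same out-neighbours cannot reach each other, so their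
`D`-neighbourhoods agree as soon as `0 ∉ D`. -/
lemma weightD_eq_of_isSource (hD : 0 ∉ D) {u u' : V} (hu : IsSource A u)
    (hu' : IsSource A u') (hA : ∀ w, A u w ↔ A u' w) :
    weightD A D g u = weightD A D g u' := by
  have not_mem_of_isSource : ∀ {x y : V}, IsSource A y → ¬∃ k ∈ D, distEq A x y k :=
    fun hy ⟨_, hk, h⟩ => not_distEq_of_isSource (ne_of_mem_of_not_mem hk hD) hy h
  refine weightD_congr fun v => ?_
  by_cases hvu : v = u
  · subst hvu
    exact iff_of_false (not_mem_of_isSource hu) (not_mem_of_isSource hu)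
  by_cases hvu' : v = u'
  · subst hvu'
    exact iff_of_false (not_mem_of_isSource hu') (not_mem_of_isSource hu')
  simp only [distEq_iff_of_forall_adj_iff hA hvu hvu']

end DWeight

section OrientedStar

variable {n : ℕ} {σ : Fin n → Bool}

lemma starArc_isSink {i : Fin n} (hi : σ i = false) : IsSink (starArc n σ) (some i) := by
  rintro w ⟨j, ⟨hij, -, hj⟩ | ⟨h, -⟩⟩
  · cases Option.some.inj hij
    simp [hi] at hj
  · exact Option.some_ne_none i h

lemma starArc_isSource {i : Fin n} (hi : σ i = true) : IsSource (starArc n σ) (some i) := by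
  rintro w ⟨j, ⟨-, h, -⟩ | ⟨-, hij, hj⟩⟩
  · exact Option.some_ne_none i h
  · cases Option.some.inj hij
    simp [hi] at hj

lemma starArc_some_iff {i : Fin n} (hi : σ i = true) (w : Option (Fin n)) :
    starArc n σ (some i) w ↔ w = none := by
  constructor
  · rintro ⟨j, ⟨-, hw, -⟩ | ⟨h, -⟩⟩
    · exact hw
    · exact absurd h (Option.some_ne_none i)
  · rintro rfl
    exact ⟨i, Or.inl ⟨rfl, rfl, hi⟩⟩

lemma injective_of_injective_weightD_starArc {D : Set ℕ} (hD : 0 ∉ D)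
    {g : Option (Fin n) → ℕ} (hg : Function.Injective (weightD (starArc n σ) D g)) :
    Function.Injective σ := by
  intro i j hij
  apply Option.some.inj
  apply hg
  cases hi : σ i with
  | false =>
    have hj := hij ▸ hi
    rw [weightD_eq_zero_of_isSink hD (starArc_isSink hi),
      weightD_eq_zero_of_isSink hD (starArc_isSink hj)]
  | true =>
    have hj := hij ▸ hi
    exact weightD_eq_of_isSource hD (starArc_isSource hi) (starArc_isSource hj)
      fun w => by rw [starArc_some_iff hi, starArc_some_iff hj]

end OrientedStar

/-- If an oriented star `K⃗_{1,n}` with `n ≥ 2` is `{1,2}`-antimagic,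
then it has exactly one leaf that is a sink and exactly one leaf that is a source;
in particular `n = 2`. -/
theorem orientedStar_oneTwo_antimagic_structure (n : ℕ) (hn : 2 ≤ n)
    (σ : Fin n → Bool) (h : IsDAntimagic (starArc n σ) {1, 2}) :
    (∃! i : Fin n, σ i = false) ∧ (∃! i : Fin n, σ i = true) ∧ n = 2 := by
  obtain ⟨g, -, hg⟩ := h
  have hσ : Function.Injective σ := injective_of_injective_weightD_starArc (by simp) hg
  have hcard : n ≤ 2 := by simpa using Fintype.card_le_of_injective σ hσ
  have hbij : Function.Bijective σ :=
    (Fintype.bijective_iff_injective_and_card σ).mpr ⟨hσ, by simp; omega⟩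
  exact ⟨hbij.existsUnique false, hbij.existsUnique true, by omega⟩
end
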